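/- arXiv:2004.11271 — 6 statements merged into one kernel-verified Lean document; each statement's English description precedes it below -/
import Mathlib

section
/- Let n ≥ 2 and let S ⊂ ℝ^n be a bounded Borel set with 0 < H^{n-1}(S) < ∞. Then there exists a constant C > 0 such that for every rotation R ∈ SO(n) and every vector c ∈ ℝ^n one has |R − Id| + |c| ≤ C ∫_S |Rx − x − c| dH^{n-1}(x). -/
open MeasureTheory Filter Matrix

noncomputable def frobSq {n : ℕ} (X : Matrix (Fin n) (Fin n) ℝ) : ℝ := ∑ i, ∑ j, (X i j)^2
noncomputable def frob {n : ℕ} (X : Matrix (Fin n) (Fin n) ℝ) : ℝ := Real.sqrt (frobSq X)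
noncomputable def msym {n : ℕ} (X : Matrix (Fin n) (Fin n) ℝ) : Matrix (Fin n) (Fin n) ℝ :=
  (1/2 : ℝ) • (X + Xᵀ)
noncomputable def mdev {n : ℕ} (X : Matrix (Fin n) (Fin n) ℝ) : Matrix (Fin n) (Fin n) ℝ :=
  X - (X.trace / n) • (1 : Matrix (Fin n) (Fin n) ℝ)
noncomputable def mils {n : ℕ} (X : Matrix (Fin n) (Fin n) ℝ) : Matrix (Fin n) (Fin n) ℝ :=
  msym X - (X.trace / n) • (1 : Matrix (Fin n) (Fin n) ℝ)

/-- Matrix exponential, defined by its power series. -/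
noncomputable def mexp {n : ℕ} (A : Matrix (Fin n) (Fin n) ℝ) : Matrix (Fin n) (Fin n) ℝ :=
  ∑' k : ℕ, ((k.factorial : ℝ)⁻¹) • A ^ k

/-- The eigenvalues of a symmetric real matrix, listed in ascending order
(and junk value `0` if the matrix is not symmetric). -/
noncomputable def sortedEig {n : ℕ} (A : Matrix (Fin n) (Fin n) ℝ) : Fin n → ℝ :=
  if hA : A.IsHermitian then fun i => hA.eigenvalues (Tuple.sort hA.eigenvalues i) else 0

/-- The singular values of a real square matrix in ascending order. -/
noncomputable def singVals {n : ℕ} (X : Matrix (Fin n) (Fin n) ℝ) : Fin n → ℝ :=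
  fun i => Real.sqrt (sortedEig (Xᵀ * X) i)

/-- The Jacobian matrix of a map `ℝ^n → ℝ^n`. -/
noncomputable def jac {n : ℕ} (u : EuclideanSpace ℝ (Fin n) → EuclideanSpace ℝ (Fin n))
    (x : EuclideanSpace ℝ (Fin n)) : Matrix (Fin n) (Fin n) ℝ :=
  fun i j => fderiv ℝ u x (EuclideanSpace.single j 1) i

/-!
Write `Φ(A, c) = ∫_S |A x - c| dH^{n-1}` (`affineL1Norm`), a seminorm in `(A, c)`. If `R ∈ SO(n)`
and `R ≠ 1`, then `ker (R - 1)` has codimension at least two (codimension one would make `R` the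
reflection in that hyperplane, of determinant `-1`), so the affine set `{x | (R - 1) x = c}` is
`H^{n-1}`-null and `Φ(R - 1, c) > 0`. By compactness `Φ(R - 1, c)` is bounded below while `R` stays
away from `1` and `c` is bounded, and for large `c` the translation dominates. Near `R = 1`,
`R - 1 = W - ½ (R - 1)ᵀ (R - 1)` with `W` skew-symmetric; nonzero skew-symmetric matrices also have
kernels of codimension at least two, so homogeneity and compactness give `Φ(W, c) ≳ |W| + |c|`,
and the quadratic error term is absorbed.
-/

open scoped RealInnerProductSpace NNReal

attribute [local instance] Matrix.frobeniusNormedAddCommGroup Matrix.frobeniusNormedSpace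

section Frobenius

variable {n : ℕ}

lemma frob_eq_norm (X : Matrix (Fin n) (Fin n) ℝ) : frob X = ‖X‖ := by
  simp only [frob, frobSq, Matrix.frobenius_norm_def, Real.norm_eq_abs, Real.sqrt_eq_rpow,
    Real.rpow_two, sq_abs]

lemma norm_toEuclideanLin_le (A : Matrix (Fin n) (Fin n) ℝ) (x : EuclideanSpace ℝ (Fin n)) :
    ‖toEuclideanLin A x‖ ≤ ‖A‖ * ‖x‖ := by
  have h := Matrix.frobenius_norm_mul A (Matrix.replicateCol Unit x.ofLp)
  rwa [← Matrix.replicateCol_mulVec, Matrix.frobenius_norm_replicateCol,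
    Matrix.frobenius_norm_replicateCol, WithLp.toLp_ofLp, ← Matrix.toLpLin_apply] at h

lemma norm_of_transpose_mul_self_eq_one {R : Matrix (Fin n) (Fin n) ℝ} (hR : Rᵀ * R = 1) :
    ‖R‖ = Real.sqrt n := by
  rw [← frob_eq_norm, frob, frobSq, Finset.sum_comm]
  congr 1
  calc ∑ j, ∑ i, R i j ^ 2 = ∑ j, (Rᵀ * R) j j := by
        simp [Matrix.mul_apply, sq]
    _ = n := by simp [hR]

lemma norm_sub_one_le_of_transpose_mul_self_eq_one {R : Matrix (Fin n) (Fin n) ℝ}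
    (hR : Rᵀ * R = 1) : ‖R - 1‖ ≤ 2 * Real.sqrt n := by
  have h1 : ‖(1 : Matrix (Fin n) (Fin n) ℝ)‖ = Real.sqrt n := by
    simpa using norm_of_transpose_mul_self_eq_one (R := 1) (by simp)
  calc ‖R - 1‖ ≤ ‖R‖ + ‖(1 : Matrix (Fin n) (Fin n) ℝ)‖ := norm_sub_le _ _
    _ = 2 * Real.sqrt n := by rw [norm_of_transpose_mul_self_eq_one hR, h1]; ring

end Frobenius

section KernelDimension

open Module Submodule

variable {E : Type*} [NormedAddCommGroup E] [InnerProductSpace ℝ E] [FiniteDimensional ℝ E]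

lemma exists_orthogonal_eq_span_of_finrank_add_one {K : Submodule ℝ E}
    (hK : finrank ℝ K + 1 = finrank ℝ E) :
    ∃ u ∈ Kᗮ, u ≠ 0 ∧ ∀ w ∈ Kᗮ, ∃ t : ℝ, w = t • u := by
  obtain ⟨⟨u, hu⟩, hu0, hspan⟩ := finrank_eq_one_iff'.mp (finrank_add_finrank_orthogonal' hK)
  refine ⟨u, hu, fun h => hu0 (Subtype.ext h), fun w hw => ?_⟩
  obtain ⟨t, ht⟩ := hspan ⟨w, hw⟩
  exact ⟨t, congrArg Subtype.val ht.symm⟩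

lemma finrank_ker_add_two_le_of_skew {f : E →ₗ[ℝ] E} (hf : ∀ x y, ⟪f x, y⟫ = -⟪x, f y⟫)
    (h0 : f ≠ 0) : finrank ℝ (LinearMap.ker f) + 2 ≤ finrank ℝ E := by
  set K := LinearMap.ker f
  have hK : finrank ℝ K < finrank ℝ E := finrank_lt (by simpa [K, LinearMap.ker_eq_top] using h0)
  by_contra! hcodim
  obtain ⟨u, huK, hu0, hline⟩ := exists_orthogonal_eq_span_of_finrank_add_one (K := K) (by omega)
  have hfu : f u ∈ Kᗮ := fun k hk => by
    have h := hf k u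
    rw [LinearMap.mem_ker.mp hk, inner_zero_left] at h
    linarith
  obtain ⟨t, ht⟩ := hline _ hfu
  have hinner : ⟪f u, u⟫ = 0 := by linarith [hf u u, real_inner_comm u (f u)]
  have ht0 : t = 0 := by
    rw [ht, real_inner_smul_left] at hinner
    exact (mul_eq_zero.mp hinner).resolve_right (by simpa using hu0)
  have huK' : u ∈ K := by simp [K, ht, ht0]
  exact hu0 (inner_self_eq_zero.mp (inner_right_of_mem_orthogonal huK' huK))

lemma finrank_ker_sub_one_add_two_le {f : E →ₗ[ℝ] E} (hf : ∀ x y, ⟪f x, f y⟫ = ⟪x, y⟫)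
    (hdet : LinearMap.det f = 1) (h1 : f ≠ 1) :
    finrank ℝ (LinearMap.ker (f - 1)) + 2 ≤ finrank ℝ E := by
  set K := LinearMap.ker (f - 1)
  have hmem : ∀ x, x ∈ K ↔ f x = x := fun x => by simp [K, sub_eq_zero]
  have hK : finrank ℝ K < finrank ℝ E :=
    finrank_lt (by simpa [K, LinearMap.ker_eq_top, sub_eq_zero] using h1)
  by_contra! hcodim
  have hcodim' : finrank ℝ K + 1 = finrank ℝ E := by omega
  obtain ⟨u, huK, hu0, hline⟩ := exists_orthogonal_eq_span_of_finrank_add_one hcodim'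
  have hfu : f u ∈ Kᗮ := fun k hk => by
    have h := hf k u
    rwa [(hmem k).mp hk, inner_right_of_mem_orthogonal hk huK] at h
  obtain ⟨t, ht⟩ := hline _ hfu
  have huu : ⟪u, u⟫ ≠ 0 := by simpa using hu0
  have ht2 : t * t = 1 := by
    have h := hf u u
    rw [ht, real_inner_smul_left, real_inner_smul_right, ← mul_assoc] at h
    exact (mul_eq_right₀ huu).mp h
  rcases mul_self_eq_one_iff.mp ht2 with rfl | rfl
  · exact hu0 (inner_self_eq_zero.mp
      (inner_right_of_mem_orthogonal ((hmem u).mpr (by simpa using ht)) huK))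
  · have hrefl : f = K.reflection.toLinearMap := by
      ext x
      obtain ⟨s, hs⟩ := hline _ (sub_starProjection_mem_orthogonal (K := K) x)
      have hfix : f (K.starProjection x) = K.starProjection x :=
        (hmem _).mp (starProjection_apply_mem K x)
      have hx : x = K.starProjection x + s • u := by rw [← hs]; abel
      change f x = K.reflection x
      rw [Submodule.reflection_apply]
      conv_lhs => rw [hx, map_add, map_smul, hfix, ht]
      nth_rewrite 3 [hx]
      module
    rw [hrefl, det_reflection, finrank_add_finrank_orthogonal' hcodim'] at hdet
    norm_num at hdet

end KernelDimension

section AffineNull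

open Module

variable {E F : Type*} [NormedAddCommGroup E] [NormedSpace ℝ E] [AddCommGroup F] [Module ℝ F]

lemma hausdorffMeasure_affineSubspace_eq_zero [FiniteDimensional ℝ E] [MeasurableSpace E]
    [BorelSpace E] (s : AffineSubspace ℝ E) {d : ℝ} (hd : (finrank ℝ s.direction : ℝ) < d) :
    μH[d] (s : Set E) = 0 := by
  rcases (s : Set E).eq_empty_or_nonempty with h | h
  · rw [h, measure_empty]
  lift d to ℝ≥0 using (Nat.cast_nonneg _).trans hd.le
  apply hausdorffMeasure_of_dimH_lt
  rw [Real.Convex.dimH_eq_finrank_vectorSpan s.convex h, ← AffineSubspace.direction]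
  exact_mod_cast hd

lemma exists_affineSubspace_direction_eq_ker (f : E →ₗ[ℝ] F) (c : F) :
    ∃ s : AffineSubspace ℝ E, s.direction = LinearMap.ker f ∧ {x | f x = c} ⊆ s := by
  by_cases h : ∃ x₀, f x₀ = c
  · obtain ⟨x₀, hx₀⟩ := h
    refine ⟨AffineSubspace.mk' x₀ (LinearMap.ker f), AffineSubspace.direction_mk' _ _,
      fun x hx => ?_⟩
    simp only [SetLike.mem_coe, AffineSubspace.mem_mk', vsub_eq_sub, LinearMap.mem_ker, map_sub]
    rw [hx, hx₀, sub_self]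
  · exact ⟨AffineSubspace.mk' 0 (LinearMap.ker f), AffineSubspace.direction_mk' _ _,
      fun x hx => absurd ⟨x, hx⟩ h⟩

end AffineNull

section MatrixKernel

open Module

variable {n : ℕ}

lemma finrank_ker_toEuclideanLin_add_two_le_of_transpose_eq_neg {A : Matrix (Fin n) (Fin n) ℝ}
    (hA : Aᵀ = -A) (h0 : A ≠ 0) :
    finrank ℝ (LinearMap.ker (toEuclideanLin A)) + 2 ≤ n := by
  have hadj : LinearMap.adjoint (toEuclideanLin A) = -toEuclideanLin A := by
    rw [← toEuclideanLin_conjTranspose_eq_adjoint, Matrix.conjTranspose_eq_transpose_of_trivial,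
      hA, map_neg]
  have h := finrank_ker_add_two_le_of_skew (f := toEuclideanLin A)
    (fun x y => by rw [← LinearMap.adjoint_inner_right, hadj, LinearMap.neg_apply, inner_neg_right])
    (by simpa using h0)
  rwa [finrank_euclideanSpace_fin] at h

lemma finrank_ker_toEuclideanLin_sub_one_add_two_le {R : Matrix (Fin n) (Fin n) ℝ}
    (hR : Rᵀ * R = 1) (hdet : R.det = 1) (h1 : R ≠ 1) :
    finrank ℝ (LinearMap.ker (toEuclideanLin (R - 1))) + 2 ≤ n := by
  have hisom : ∀ x y, ⟪toEuclideanLin R x, toEuclideanLin R y⟫ = ⟪x, y⟫ := by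
    intro x y
    rw [← LinearMap.adjoint_inner_right, ← toEuclideanLin_conjTranspose_eq_adjoint,
      Matrix.conjTranspose_eq_transpose_of_trivial, ← LinearMap.comp_apply,
      ← Matrix.toLpLin_mul_same, hR, Matrix.toLpLin_one, LinearMap.id_apply]
  have hone : toEuclideanLin (1 : Matrix (Fin n) (Fin n) ℝ) = 1 := Matrix.toLpLin_one _
  have h := finrank_ker_sub_one_add_two_le hisom (by simpa using hdet)
    (fun h => h1 (toEuclideanLin.injective (h.trans hone.symm)))
  rwa [finrank_euclideanSpace_fin, ← hone, ← map_sub] at h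

end MatrixKernel

section AffineL1Norm

variable {n : ℕ} (μ : Measure (EuclideanSpace ℝ (Fin n)))

noncomputable def affineL1Norm (A : Matrix (Fin n) (Fin n) ℝ) (c : EuclideanSpace ℝ (Fin n)) :
    ℝ :=
  ∫ x, ‖toEuclideanLin A x - c‖ ∂μ

variable {μ}

lemma affineL1Norm_nonneg (A : Matrix (Fin n) (Fin n) ℝ) (c : EuclideanSpace ℝ (Fin n)) :
    0 ≤ affineL1Norm μ A c :=
  integral_nonneg fun _ => norm_nonneg _

lemma affineL1Norm_zero_left (c : EuclideanSpace ℝ (Fin n)) :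
    affineL1Norm μ 0 c = μ.real Set.univ * ‖c‖ := by
  simp [affineL1Norm]

lemma affineL1Norm_smul (t : ℝ) (A : Matrix (Fin n) (Fin n) ℝ) (c : EuclideanSpace ℝ (Fin n)) :
    affineL1Norm μ (t • A) (t • c) = |t| * affineL1Norm μ A c := by
  simp only [affineL1Norm, ← integral_const_mul, map_smul, LinearMap.smul_apply, ← smul_sub,
    norm_smul, Real.norm_eq_abs]

lemma integrable_norm_toEuclideanLin_sub [IsFiniteMeasure μ] (hμ : Integrable (‖·‖) μ)
    (A : Matrix (Fin n) (Fin n) ℝ) (c : EuclideanSpace ℝ (Fin n)) :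
    Integrable (fun x => ‖toEuclideanLin A x - c‖) μ := by
  refine Integrable.mono' ((hμ.const_mul ‖A‖).add (integrable_const ‖c‖))
    (LinearMap.continuous_of_finiteDimensional _ |>.sub continuous_const).norm.aestronglyMeasurable
    (ae_of_all _ fun x => ?_)
  rw [norm_norm]
  show _ ≤ ‖A‖ * ‖x‖ + ‖c‖
  exact (norm_sub_le _ _).trans (by gcongr; exact norm_toEuclideanLin_le A x)

lemma affineL1Norm_le_add [IsFiniteMeasure μ] (hμ : Integrable (‖·‖) μ)
    (A B : Matrix (Fin n) (Fin n) ℝ) (c d : EuclideanSpace ℝ (Fin n)) :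
    affineL1Norm μ A c ≤
      affineL1Norm μ B d + ‖A - B‖ * ∫ x, ‖x‖ ∂μ + μ.real Set.univ * ‖c - d‖ := by
  have hpt : ∀ x, ‖toEuclideanLin A x - c‖ ≤
      ‖toEuclideanLin B x - d‖ + ‖A - B‖ * ‖x‖ + ‖c - d‖ := fun x => by
    have h : toEuclideanLin A x - c =
        (toEuclideanLin B x - d) + toEuclideanLin (A - B) x - (c - d) := by
      rw [map_sub, LinearMap.sub_apply]; abel
    rw [h]
    exact (norm_sub_le _ _).trans (by
      gcongr; exact (norm_add_le _ _).trans (by gcongr; exact norm_toEuclideanLin_le _ x))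
  have hB := integrable_norm_toEuclideanLin_sub hμ B d
  calc affineL1Norm μ A c
      ≤ ∫ x, (‖toEuclideanLin B x - d‖ + ‖A - B‖ * ‖x‖ + ‖c - d‖) ∂μ :=
        integral_mono (integrable_norm_toEuclideanLin_sub hμ A c)
          ((hB.add (hμ.const_mul _)).add (integrable_const _)) hpt
    _ = _ := by
        rw [integral_add ?_ (integrable_const _), integral_add hB (hμ.const_mul _),
          integral_const_mul, integral_const, smul_eq_mul]
        · rfl
        · exact hB.add (hμ.const_mul _)

lemma sub_le_affineL1Norm [IsFiniteMeasure μ] (hμ : Integrable (‖·‖) μ)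
    (A : Matrix (Fin n) (Fin n) ℝ) (c : EuclideanSpace ℝ (Fin n)) :
    μ.real Set.univ * ‖c‖ - ‖A‖ * ∫ x, ‖x‖ ∂μ ≤ affineL1Norm μ A c := by
  have h := affineL1Norm_le_add hμ 0 A c c
  rw [affineL1Norm_zero_left, zero_sub, norm_neg, sub_self, norm_zero, mul_zero, add_zero] at h
  linarith

lemma continuous_affineL1Norm [IsFiniteMeasure μ] (hμ : Integrable (‖·‖) μ) :
    Continuous fun p : Matrix (Fin n) (Fin n) ℝ × EuclideanSpace ℝ (Fin n) =>
      affineL1Norm μ p.1 p.2 := by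
  refine (LipschitzWith.of_le_add_mul' ((∫ x, ‖x‖ ∂μ) + μ.real Set.univ)
    fun p q => (affineL1Norm_le_add hμ p.1 q.1 p.2 q.2).trans ?_).continuous
  have h1 : ‖p.1 - q.1‖ ≤ dist p q := by rw [dist_eq_norm]; exact norm_fst_le (p - q)
  have h2 : ‖p.2 - q.2‖ ≤ dist p q := by rw [dist_eq_norm]; exact norm_snd_le (p - q)
  have hm1 : 0 ≤ ∫ x, ‖x‖ ∂μ := integral_nonneg fun _ => norm_nonneg _
  have hm0 : 0 ≤ μ.real Set.univ := measureReal_nonneg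
  nlinarith

lemma affineL1Norm_pos [IsFiniteMeasure μ] [NeZero μ] (hμ : Integrable (‖·‖) μ)
    {A : Matrix (Fin n) (Fin n) ℝ} {c : EuclideanSpace ℝ (Fin n)}
    (hnull : μ {x | toEuclideanLin A x = c} = 0) : 0 < affineL1Norm μ A c := by
  rw [affineL1Norm, integral_pos_iff_support_of_nonneg (fun _ => norm_nonneg _)
    (integrable_norm_toEuclideanLin_sub hμ A c)]
  have hsupp : Function.support (fun x => ‖toEuclideanLin A x - c‖) =
      {x | toEuclideanLin A x = c}ᶜ := by
    ext x; simp [sub_eq_zero]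
  rw [hsupp, pos_iff_ne_zero]
  intro h
  exact NeZero.ne μ (Measure.measure_univ_eq_zero.mp (le_antisymm
    ((measure_univ_le_add_compl _).trans (by rw [hnull, h, add_zero])) bot_le))

end AffineL1Norm

section Compactness

variable {X : Type*} [TopologicalSpace X]

lemma IsCompact.exists_pos_le_of_pos {K : Set X} (hK : IsCompact K) {f : X → ℝ}
    (hf : ContinuousOn f K) (hpos : ∀ x ∈ K, 0 < f x) : ∃ m > 0, ∀ x ∈ K, m ≤ f x := by
  rcases K.eq_empty_or_nonempty with rfl | hne
  · exact ⟨1, one_pos, by simp⟩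
  obtain ⟨x₀, hx₀, hmin⟩ := hK.exists_isMinOn hne hf
  exact ⟨f x₀, hpos x₀ hx₀, hmin⟩

variable {V : Type*} [NormedAddCommGroup V] [NormedSpace ℝ V] [ProperSpace V]

lemma exists_pos_mul_norm_le_of_isClosed_cone {K : Set V} (hK : IsClosed K)
    (hcone : ∀ v ∈ K, ∀ t : ℝ, 0 ≤ t → t • v ∈ K) {f : V → ℝ} (hf : Continuous f)
    (hhom : ∀ v, ∀ t : ℝ, 0 ≤ t → f (t • v) = t * f v) (hpos : ∀ v ∈ K, v ≠ 0 → 0 < f v) :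
    ∃ ε > 0, ∀ v ∈ K, ε * ‖v‖ ≤ f v := by
  obtain ⟨ε, hε, hmin⟩ := (isCompact_sphere (0 : V) 1).inter_left hK |>.exists_pos_le_of_pos
    hf.continuousOn fun v hv => hpos v hv.1 (ne_zero_of_mem_unit_sphere ⟨v, hv.2⟩)
  refine ⟨ε, hε, fun v hv => ?_⟩
  rcases eq_or_ne v 0 with rfl | hv0
  · simpa using (hhom 0 0 le_rfl).ge
  have hnv : 0 < ‖v‖ := norm_pos_iff.mpr hv0
  have hunit := hmin (‖v‖⁻¹ • v) ⟨hcone v hv _ (inv_nonneg.mpr hnv.le), by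
    simp [norm_smul, hnv.ne']⟩
  rw [hhom v _ (inv_nonneg.mpr hnv.le)] at hunit
  calc ε * ‖v‖ ≤ ‖v‖⁻¹ * f v * ‖v‖ := by gcongr
    _ = f v := by field_simp

end Compactness

section Rigidity

open Module

variable {n : ℕ} {μ : Measure (EuclideanSpace ℝ (Fin n))} [IsFiniteMeasure μ]

lemma affineL1Norm_pos_of_finrank_ker [NeZero μ] (hμ : Integrable (‖·‖) μ)
    (hnull : ∀ s : AffineSubspace ℝ (EuclideanSpace ℝ (Fin n)),
      finrank ℝ s.direction + 2 ≤ n → μ s = 0)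
    {A : Matrix (Fin n) (Fin n) ℝ} (hA : finrank ℝ (LinearMap.ker (toEuclideanLin A)) + 2 ≤ n)
    (c : EuclideanSpace ℝ (Fin n)) : 0 < affineL1Norm μ A c := by
  obtain ⟨s, hdir, hsub⟩ := exists_affineSubspace_direction_eq_ker (toEuclideanLin A) c
  exact affineL1Norm_pos hμ (measure_mono_null hsub (hnull s (hdir ▸ hA)))

lemma exists_pos_mul_le_affineL1Norm_of_transpose_eq_neg [NeZero μ] (hμ : Integrable (‖·‖) μ)
    (hnull : ∀ s : AffineSubspace ℝ (EuclideanSpace ℝ (Fin n)),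
      finrank ℝ s.direction + 2 ≤ n → μ s = 0) :
    ∃ ε > 0, ∀ (W : Matrix (Fin n) (Fin n) ℝ) (c : EuclideanSpace ℝ (Fin n)), Wᵀ = -W →
      ε * (‖W‖ + ‖c‖) ≤ affineL1Norm μ W c := by
  obtain ⟨ε, hε, hle⟩ := exists_pos_mul_norm_le_of_isClosed_cone
    (K := {p : Matrix (Fin n) (Fin n) ℝ × EuclideanSpace ℝ (Fin n) | p.1ᵀ = -p.1})
    (isClosed_eq continuous_fst.matrix_transpose continuous_fst.neg)
    (fun p hp t _ => by simp_all [Matrix.transpose_smul])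
    (continuous_affineL1Norm hμ)
    (fun p t ht => by simpa [abs_of_nonneg ht] using affineL1Norm_smul t p.1 p.2)
    (fun p hp hp0 => by
      rcases eq_or_ne p.1 0 with h0 | h0
      · have hc : p.2 ≠ 0 := fun hc => hp0 (Prod.ext h0 hc)
        rw [h0, affineL1Norm_zero_left]
        exact mul_pos measureReal_univ_pos (norm_pos_iff.mpr hc)
      · exact affineL1Norm_pos_of_finrank_ker hμ hnull
          (finrank_ker_toEuclideanLin_add_two_le_of_transpose_eq_neg hp h0) _)
  refine ⟨ε / 2, half_pos hε, fun W c hW => ?_⟩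
  have h := hle (W, c) hW
  have hsum : ‖W‖ + ‖c‖ ≤ 2 * ‖(W, c)‖ := by
    rw [two_mul]; exact add_le_add (norm_fst_le (W, c)) (norm_snd_le (W, c))
  nlinarith

lemma msym_sub_one_of_transpose_mul_self_eq_one {R : Matrix (Fin n) (Fin n) ℝ}
    (hR : Rᵀ * R = 1) : msym (R - 1) = -(1 / 2 : ℝ) • ((R - 1)ᵀ * (R - 1)) := by
  have h : (R - 1)ᵀ * (R - 1) = -((R - 1) + (R - 1)ᵀ) := by
    rw [Matrix.transpose_sub, Matrix.transpose_one, sub_mul, mul_sub, mul_sub, hR]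
    noncomm_ring
  rw [msym, h, smul_neg, neg_smul, neg_neg]

lemma transpose_sub_msym (X : Matrix (Fin n) (Fin n) ℝ) : (X - msym X)ᵀ = -(X - msym X) := by
  simp only [msym, Matrix.transpose_sub, Matrix.transpose_smul, Matrix.transpose_add,
    Matrix.transpose_transpose]
  module

lemma norm_msym_sub_one_le {R : Matrix (Fin n) (Fin n) ℝ} (hR : Rᵀ * R = 1) :
    ‖msym (R - 1)‖ ≤ ‖R - 1‖ ^ 2 / 2 := by
  have hmul := Matrix.frobenius_norm_mul (R - 1)ᵀ (R - 1)
  rw [Matrix.frobenius_norm_transpose] at hmul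
  rw [msym_sub_one_of_transpose_mul_self_eq_one hR, norm_smul, Real.norm_eq_abs, abs_neg,
    abs_of_pos one_half_pos]
  nlinarith

lemma half_mul_le_affineL1Norm_of_norm_sub_one_le (hμ : Integrable (‖·‖) μ) {ε : ℝ} (hε : 0 < ε)
    (hskew : ∀ (W : Matrix (Fin n) (Fin n) ℝ) (c : EuclideanSpace ℝ (Fin n)), Wᵀ = -W →
      ε * (‖W‖ + ‖c‖) ≤ affineL1Norm μ W c)
    {R : Matrix (Fin n) (Fin n) ℝ} (hR : Rᵀ * R = 1)
    (hsmall : ‖R - 1‖ * (ε + ∫ x, ‖x‖ ∂μ) ≤ ε) (c : EuclideanSpace ℝ (Fin n)) :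
    ε / 2 * (‖R - 1‖ + ‖c‖) ≤ affineL1Norm μ (R - 1) c := by
  set S := msym (R - 1)
  have hW := hskew (R - 1 - S) c (transpose_sub_msym _)
  have hlip := affineL1Norm_le_add hμ (R - 1 - S) (R - 1) c c
  rw [sub_sub_cancel_left, norm_neg, sub_self, norm_zero, mul_zero, add_zero] at hlip
  have htri : ‖R - 1‖ ≤ ‖R - 1 - S‖ + ‖S‖ := norm_le_norm_sub_add _ _
  have hS : ‖S‖ ≤ ‖R - 1‖ ^ 2 / 2 := norm_msym_sub_one_le hR
  have hm1 : 0 ≤ ∫ x, ‖x‖ ∂μ := integral_nonneg fun _ => norm_nonneg _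
  have hquad : ‖S‖ * (ε + ∫ x, ‖x‖ ∂μ) ≤ ε / 2 * ‖R - 1‖ := by
    calc ‖S‖ * (ε + ∫ x, ‖x‖ ∂μ) ≤ ‖R - 1‖ ^ 2 / 2 * (ε + ∫ x, ‖x‖ ∂μ) := by gcongr
      _ = ‖R - 1‖ / 2 * (‖R - 1‖ * (ε + ∫ x, ‖x‖ ∂μ)) := by ring
      _ ≤ ‖R - 1‖ / 2 * ε := by gcongr
      _ = ε / 2 * ‖R - 1‖ := by ring
  nlinarith [norm_nonneg c]

lemma exists_pos_le_affineL1Norm_of_le_norm_sub_one [NeZero μ] (hμ : Integrable (‖·‖) μ)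
    (hnull : ∀ s : AffineSubspace ℝ (EuclideanSpace ℝ (Fin n)),
      finrank ℝ s.direction + 2 ≤ n → μ s = 0) {δ : ℝ} (hδ : 0 < δ) (T : ℝ) :
    ∃ m > 0, ∀ (R : Matrix (Fin n) (Fin n) ℝ) (c : EuclideanSpace ℝ (Fin n)),
      Rᵀ * R = 1 → R.det = 1 → δ ≤ ‖R - 1‖ → ‖c‖ ≤ T → m ≤ affineL1Norm μ (R - 1) c := by
  set K := {p : Matrix (Fin n) (Fin n) ℝ × EuclideanSpace ℝ (Fin n) |
    p.1ᵀ * p.1 = 1 ∧ p.1.det = 1 ∧ δ ≤ ‖p.1 - 1‖ ∧ ‖p.2‖ ≤ T}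
  have hclosed : IsClosed K :=
    (isClosed_eq (continuous_fst.matrix_transpose.matrix_mul continuous_fst)
      continuous_const).inter <|
      (isClosed_eq continuous_fst.matrix_det continuous_const).inter <|
      (isClosed_le continuous_const (continuous_fst.sub continuous_const).norm).inter <|
      isClosed_le continuous_snd.norm continuous_const
  have hbdd : Bornology.IsBounded K := by
    refine (Metric.isBounded_closedBall (x := 0) (r := max (Real.sqrt n) T)).subset fun p hp => ?_
    rw [Metric.mem_closedBall, dist_zero_right, Prod.norm_def]
    exact max_le_max (norm_of_transpose_mul_self_eq_one hp.1).le hp.2.2.2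
  obtain ⟨m, hm, hmin⟩ := (Metric.isCompact_of_isClosed_isBounded hclosed hbdd).exists_pos_le_of_pos
    (f := fun p => affineL1Norm μ (p.1 - 1) p.2)
    ((continuous_affineL1Norm hμ).comp ((continuous_fst.sub continuous_const).prodMk
      continuous_snd)).continuousOn
    fun p ⟨hR, hdet, hδR, _⟩ => affineL1Norm_pos_of_finrank_ker hμ hnull
      (finrank_ker_toEuclideanLin_sub_one_add_two_le hR hdet
        fun h1 => by simp [h1] at hδR; linarith) _
  exact ⟨m, hm, fun R c hR hdet hδR hc => hmin (R, c) ⟨hR, hdet, hδR, hc⟩⟩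

lemma norm_sub_one_add_norm_le_of_large_translation [NeZero μ] (hμ : Integrable (‖·‖) μ)
    {R : Matrix (Fin n) (Fin n) ℝ} (hR : Rᵀ * R = 1) {c : EuclideanSpace ℝ (Fin n)}
    (hc : 2 * Real.sqrt n * (μ.real Set.univ + 2 * ∫ x, ‖x‖ ∂μ) ≤ μ.real Set.univ * ‖c‖) :
    ‖R - 1‖ + ‖c‖ ≤ 4 / μ.real Set.univ * affineL1Norm μ (R - 1) c := by
  have hm0 : 0 < μ.real Set.univ := measureReal_univ_pos
  have hm1 : 0 ≤ ∫ x, ‖x‖ ∂μ := integral_nonneg fun _ => norm_nonneg _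
  have he := norm_sub_one_le_of_transpose_mul_self_eq_one hR
  have hlow := sub_le_affineL1Norm hμ (R - 1) c
  rw [div_mul_eq_mul_div, le_div_iff₀ hm0]
  nlinarith [mul_le_mul_of_nonneg_right he hm1, mul_le_mul_of_nonneg_right he hm0.le,
    mul_nonneg (norm_nonneg (R - 1)) hm0.le, mul_nonneg hm0.le (norm_nonneg c)]

theorem exists_norm_sub_one_add_norm_le_mul_affineL1Norm [NeZero μ] (hμ : Integrable (‖·‖) μ)
    (hnull : ∀ s : AffineSubspace ℝ (EuclideanSpace ℝ (Fin n)),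
      finrank ℝ s.direction + 2 ≤ n → μ s = 0) :
    ∃ C > 0, ∀ (R : Matrix (Fin n) (Fin n) ℝ) (c : EuclideanSpace ℝ (Fin n)),
      Rᵀ * R = 1 → R.det = 1 → ‖R - 1‖ + ‖c‖ ≤ C * affineL1Norm μ (R - 1) c := by
  have hm0 : 0 < μ.real Set.univ := measureReal_univ_pos
  have hm1 : 0 ≤ ∫ x, ‖x‖ ∂μ := integral_nonneg fun _ => norm_nonneg _
  obtain ⟨ε, hε, hskew⟩ := exists_pos_mul_le_affineL1Norm_of_transpose_eq_neg hμ hnull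
  set δ := ε / (ε + ∫ x, ‖x‖ ∂μ)
  set T := 2 * Real.sqrt n * (μ.real Set.univ + 2 * ∫ x, ‖x‖ ∂μ) / μ.real Set.univ
  obtain ⟨m, hm, hmid⟩ :=
    exists_pos_le_affineL1Norm_of_le_norm_sub_one hμ hnull (by positivity : 0 < δ) T
  set C₀ := (2 * Real.sqrt n + T) / m
  have hT : 0 ≤ T := by positivity
  have hC₀ : 0 ≤ C₀ := by positivity
  set C := max (2 / ε) (max C₀ (4 / μ.real Set.univ))
  refine ⟨C, lt_max_of_lt_left (by positivity), fun R c hR hdet => ?_⟩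
  have hΦ := affineL1Norm_nonneg (μ := μ) (R - 1) c
  rcases le_or_gt ‖R - 1‖ δ with hsmall | hlarge
  · have h := half_mul_le_affineL1Norm_of_norm_sub_one_le hμ hε hskew hR
      ((le_div_iff₀ (by positivity)).mp hsmall) c
    calc ‖R - 1‖ + ‖c‖ ≤ 2 / ε * affineL1Norm μ (R - 1) c := by
          rw [div_mul_eq_mul_div, le_div_iff₀ hε]; linarith
      _ ≤ C * affineL1Norm μ (R - 1) c := mul_le_mul_of_nonneg_right (le_max_left _ _) hΦ
  rcases le_or_gt ‖c‖ T with hc | hc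
  · calc ‖R - 1‖ + ‖c‖ ≤ C₀ * m := by
          rw [div_mul_cancel₀ _ hm.ne']
          exact add_le_add (norm_sub_one_le_of_transpose_mul_self_eq_one hR) hc
      _ ≤ C₀ * affineL1Norm μ (R - 1) c :=
          mul_le_mul_of_nonneg_left (hmid R c hR hdet hlarge.le hc) hC₀
      _ ≤ C * affineL1Norm μ (R - 1) c :=
          mul_le_mul_of_nonneg_right ((le_max_left _ _).trans (le_max_right _ _)) hΦ
  · calc ‖R - 1‖ + ‖c‖ ≤ 4 / μ.real Set.univ * affineL1Norm μ (R - 1) c :=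
          norm_sub_one_add_norm_le_of_large_translation hμ hR
            (by linarith [(div_le_iff₀ hm0).mp hc.le])
      _ ≤ C * affineL1Norm μ (R - 1) c :=
          mul_le_mul_of_nonneg_right ((le_max_right _ _).trans (le_max_right _ _)) hΦ

end Rigidity

theorem stmt0_general (n : ℕ) (S : Set (EuclideanSpace ℝ (Fin n)))
    (hSb : Bornology.IsBounded S)
    (h0 : 0 < μH[(n : ℝ) - 1] S) (hfin : μH[(n : ℝ) - 1] S < ⊤) :
    ∃ C > (0 : ℝ), ∀ (R : Matrix (Fin n) (Fin n) ℝ) (c : EuclideanSpace ℝ (Fin n)),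
      Rᵀ * R = 1 → R.det = 1 →
      frob (R - 1) + ‖c‖ ≤
        C * ∫ x in S, ‖Matrix.toEuclideanLin R x - x - c‖ ∂(μH[(n : ℝ) - 1]) := by
  have : IsFiniteMeasure ((μH[(n : ℝ) - 1]).restrict S) :=
    isFiniteMeasure_restrict.mpr hfin.ne
  have : NeZero ((μH[(n : ℝ) - 1]).restrict S) := ⟨by simpa [Measure.restrict_eq_zero] using h0.ne'⟩
  obtain ⟨M, hM⟩ := hSb.subset_closedBall 0
  have hμ : Integrable (‖·‖) ((μH[(n : ℝ) - 1]).restrict S) :=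
    Integrable.of_bound continuous_norm.aestronglyMeasurable M <|
      ae_restrict_of_ae_restrict_of_subset hM <| ae_restrict_of_forall_mem measurableSet_closedBall
        fun x hx => by simpa using hx
  have hnull : ∀ s : AffineSubspace ℝ (EuclideanSpace ℝ (Fin n)),
      Module.finrank ℝ s.direction + 2 ≤ n → (μH[(n : ℝ) - 1]).restrict S s = 0 := fun s hs =>
    nonpos_iff_eq_zero.mp <| (Measure.restrict_apply_le S s).trans_eq <|
      hausdorffMeasure_affineSubspace_eq_zero s <| by
        have : (Module.finrank ℝ s.direction : ℝ) + 2 ≤ n := by exact_mod_cast hs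
        linarith
  obtain ⟨C, hC, hest⟩ := exists_norm_sub_one_add_norm_le_mul_affineL1Norm hμ hnull
  refine ⟨C, hC, fun R c hR hdet => ?_⟩
  simpa [frob_eq_norm, affineL1Norm, map_sub, sub_right_comm] using hest R c hR hdet

/-- Quantitative rigidity estimate for rotations on sets of positive `H^{n-1}` measure. -/
theorem stmt0 (n : ℕ) (hn : 2 ≤ n) (S : Set (EuclideanSpace ℝ (Fin n)))
    (hSb : Bornology.IsBounded S) (hSm : MeasurableSet S)
    (h0 : 0 < μH[(n : ℝ) - 1] S) (hfin : μH[(n : ℝ) - 1] S < ⊤) :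
    ∃ C > (0 : ℝ), ∀ (R : Matrix (Fin n) (Fin n) ℝ) (c : EuclideanSpace ℝ (Fin n)),
      Rᵀ * R = 1 → R.det = 1 →
      frob (R - 1) + ‖c‖ ≤
        C * ∫ x in S, ‖Matrix.toEuclideanLin R x - x - c‖ ∂(μH[(n : ℝ) - 1]) :=
  stmt0_general n S hSb h0 hfin
end

section
/- Let n ≥ 2, let S ⊂ ℝ^n be a Borel set with H^{n-1}(S) > 0, let R ∈ SO(n) and c ∈ ℝ^n. If Rx − x = c for every x ∈ S, then R = Id and c = 0. -/
open MeasureTheory Filter Matrix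

/-!
If `R x - x = c` on `S` and `x₀ ∈ S`, then `S` lies in `x₀ + K`, where `K` is the fixed
subspace of `R`. An affine subspace of dimension `< n - 1` is `H^{n-1}`-null, so `K` has
codimension at most one, and a rotation fixing a hyperplane pointwise is the identity.
-/

open Module

theorem AffineSubspace.hausdorffMeasure_eq_zero_of_finrank_lt {E : Type*}
    [NormedAddCommGroup E] [NormedSpace ℝ E] [FiniteDimensional ℝ E]
    [MeasurableSpace E] [BorelSpace E] (P : AffineSubspace ℝ E) {d : ℝ}
    (hd : (finrank ℝ P.direction : ℝ) < d) : μH[d] (P : Set E) = 0 := by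
  rcases (P : Set E).eq_empty_or_nonempty with hP | hP
  · simp [hP]
  have hdim : dimH (P : Set E) = finrank ℝ P.direction := by
    rw [Real.Convex.dimH_eq_finrank_vectorSpan P.convex hP, ← P.direction_eq_vectorSpan]
  lift d to NNReal using (Nat.cast_nonneg _).trans hd.le
  apply hausdorffMeasure_of_dimH_lt
  rw [hdim]
  exact_mod_cast hd

theorem subset_mk'_ker_id_sub_of_forall_sub_eq {R E : Type*} [Ring R] [AddCommGroup E]
    [Module R E] (f : E →ₗ[R] E) {S : Set E} {x₀ c : E} (hx₀ : x₀ ∈ S)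
    (h : ∀ x ∈ S, f x - x = c) :
    S ⊆ AffineSubspace.mk' x₀ (LinearMap.ker (LinearMap.id - f)) := by
  intro x hx
  rw [SetLike.mem_coe, AffineSubspace.mem_mk', vsub_eq_sub, LinearMap.mem_ker,
    LinearMap.sub_apply, LinearMap.id_apply, map_sub]
  linear_combination (norm := abel) h x₀ hx₀ - h x hx

/-- By Cartan–Dieudonné, `φ` is a product of at most one reflection, and a reflection in a
hyperplane has determinant `-1`. -/
theorem LinearIsometryEquiv.eq_one_of_det_eq_one_of_finrank_orthogonal_ker_le_one
    {F : Type*} [NormedAddCommGroup F] [InnerProductSpace ℝ F] [FiniteDimensional ℝ F]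
    (φ : F ≃ₗᵢ[ℝ] F) (hdet : LinearMap.det φ.toLinearEquiv.toLinearMap = 1)
    (hfix : finrank ℝ (LinearMap.ker (LinearMap.id - φ.toLinearEquiv.toLinearMap))ᗮ ≤ 1) :
    φ = 1 := by
  obtain ⟨l, hl, rfl⟩ := φ.reflections_generate_dim_aux hfix
  match l, hl with
  | [], _ => rfl
  | [v], _ =>
    simp only [List.map_cons, List.map_nil, List.prod_cons, List.prod_nil, mul_one] at hdet ⊢
    rcases eq_or_ne v 0 with rfl | hv
    · ext x
      exact Submodule.reflection_mem_subspace_eq_self (by simp)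
    · rw [Submodule.det_reflection, Submodule.orthogonal_orthogonal,
        finrank_span_singleton hv] at hdet
      norm_num at hdet

theorem Matrix.inner_toEuclideanLin_toEuclideanLin {𝕜 m n : Type*} [RCLike 𝕜] [Fintype m]
    [DecidableEq m] [Fintype n] [DecidableEq n] {A : Matrix m n 𝕜} (hA : Aᴴ * A = 1)
    (x y : EuclideanSpace 𝕜 n) :
    inner 𝕜 (toEuclideanLin A x) (toEuclideanLin A y) = inner 𝕜 x y := by
  rw [← LinearMap.adjoint_inner_right, ← toEuclideanLin_conjTranspose_eq_adjoint,
    ← LinearMap.comp_apply, ← toLpLin_mul_same, hA, toLpLin_one, LinearMap.id_apply]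

theorem Matrix.det_toEuclideanLin {𝕜 n : Type*} [RCLike 𝕜] [Fintype n] [DecidableEq n]
    (A : Matrix n n 𝕜) : LinearMap.det (toEuclideanLin A) = A.det := by
  rw [toEuclideanLin_eq_toLin_orthonormal, LinearMap.det_toLin]

theorem stmt1_general (n : ℕ) (S : Set (EuclideanSpace ℝ (Fin n)))
    (h0 : 0 < μH[(n : ℝ) - 1] S)
    (R : Matrix (Fin n) (Fin n) ℝ) (c : EuclideanSpace ℝ (Fin n))
    (hR : Rᵀ * R = 1) (hdet : R.det = 1)
    (h : ∀ x ∈ S, Matrix.toEuclideanLin R x - x = c) :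
    R = 1 ∧ c = 0 := by
  obtain ⟨x₀, hx₀⟩ := nonempty_of_measure_ne_zero h0.ne'
  let φ : EuclideanSpace ℝ (Fin n) ≃ₗᵢ[ℝ] EuclideanSpace ℝ (Fin n) :=
    ((toEuclideanLin R).isometryOfInner
      (inner_toEuclideanLin_toEuclideanLin (by simpa using hR))).toLinearIsometryEquiv rfl
  let K := LinearMap.ker (LinearMap.id - φ.toLinearEquiv.toLinearMap)
  have hSK : S ⊆ AffineSubspace.mk' x₀ K := subset_mk'_ker_id_sub_of_forall_sub_eq _ hx₀ h
  have hK : n ≤ finrank ℝ K + 1 := by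
    by_contra! hlt
    have hdim : (finrank ℝ (AffineSubspace.mk' x₀ K).direction : ℝ) < n - 1 := by
      rw [AffineSubspace.direction_mk', lt_sub_iff_add_lt]
      exact_mod_cast hlt
    exact h0.ne' <| measure_mono_null hSK <|
      AffineSubspace.hausdorffMeasure_eq_zero_of_finrank_lt _ hdim
  have hφ : φ = 1 := by
    refine φ.eq_one_of_det_eq_one_of_finrank_orthogonal_ker_le_one
      ((det_toEuclideanLin R).trans hdet) ?_
    change finrank ℝ Kᗮ ≤ 1
    have := K.finrank_add_finrank_orthogonal
    rw [finrank_euclideanSpace_fin] at this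
    omega
  have hR1 : toEuclideanLin R = LinearMap.id := LinearMap.ext fun x => congr($hφ x)
  refine ⟨toEuclideanLin.injective (hR1.trans (toLpLin_one 2).symm), ?_⟩
  rw [← h x₀ hx₀, hR1, LinearMap.id_apply, sub_self]

/-- A rotation that acts as a fixed translation on a set of positive `H^{n-1}` measure
is the identity (and the translation vanishes). -/
theorem stmt1 (n : ℕ) (hn : 2 ≤ n) (S : Set (EuclideanSpace ℝ (Fin n)))
    (hSm : MeasurableSet S) (h0 : 0 < μH[(n : ℝ) - 1] S)
    (R : Matrix (Fin n) (Fin n) ℝ) (c : EuclideanSpace ℝ (Fin n))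
    (hR : Rᵀ * R = 1) (hdet : R.det = 1)
    (h : ∀ x ∈ S, Matrix.toEuclideanLin R x - x = c) :
    R = 1 ∧ c = 0 :=
  stmt1_general n S h0 R c hR hdet h
end

section
/- Let n ≥ 2, let S ⊂ ℝ^n be a Borel set with H^{n-1}(S) > 0, let A ∈ ℝ^{n×n} be antisymmetric (Aᵀ = −A) and c ∈ ℝ^n. If Ax = c for every x ∈ S, then A = 0 and c = 0. -/
/-! If `A ≠ 0`, skew-symmetry forces `rank A ≥ 2`: for `A x ≠ 0` one has `⟪A x, x⟫ = 0` but
`⟪A (A x), x⟫ = -‖A x‖²`, so `A x` and `A (A x)` are independent. The set `S` lies in the fibre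
`A⁻¹ {c}`, a convex set whose Hausdorff dimension is at most `dim ker A ≤ n - 2 < n - 1`, so
`H^{n-1}(S) = 0`. Hence `A = 0`, and then `c = A x = 0` for any `x ∈ S`. -/

open MeasureTheory Filter Matrix

open Module
open scoped InnerProductSpace

section Skew

variable {E : Type*} [NormedAddCommGroup E] [InnerProductSpace ℝ E] {L : E →ₗ[ℝ] E}

theorem inner_apply_self_eq_zero_of_skew (hL : ∀ x y, ⟪L x, y⟫_ℝ = -⟪x, L y⟫_ℝ) (x : E) :
    ⟪L x, x⟫_ℝ = 0 := by
  linarith [hL x x, real_inner_comm x (L x)]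

theorem linearIndependent_apply_apply_of_skew (hL : ∀ x y, ⟪L x, y⟫_ℝ = -⟪x, L y⟫_ℝ) {x : E}
    (hx : L x ≠ 0) :
    LinearIndependent ℝ ![L x, L (L x)] := by
  rw [LinearIndependent.pair_iff' hx]
  intro a ha
  have key : ⟪L (L x), x⟫_ℝ = -‖L x‖ ^ 2 := by
    rw [hL, real_inner_self_eq_norm_sq]
  rw [← ha, inner_smul_left, inner_apply_self_eq_zero_of_skew hL, mul_zero, zero_eq_neg] at key
  exact hx (norm_eq_zero.1 (pow_eq_zero_iff two_ne_zero |>.1 key))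

theorem two_le_finrank_range_of_skew [FiniteDimensional ℝ E]
    (hL : ∀ x y, ⟪L x, y⟫_ℝ = -⟪x, L y⟫_ℝ) (hL0 : L ≠ 0) :
    2 ≤ finrank ℝ L.range := by
  obtain ⟨x, hx⟩ : ∃ x, L x ≠ 0 := by
    by_contra! h
    exact hL0 (LinearMap.ext h)
  have hspan : Submodule.span ℝ (Set.range ![L x, L (L x)]) ≤ L.range :=
    Submodule.span_le.2 <| Set.range_subset_iff.2 <| Fin.forall_fin_two.2
      ⟨⟨x, rfl⟩, ⟨L x, rfl⟩⟩
  simpa [finrank_span_eq_card (linearIndependent_apply_apply_of_skew hL hx)] using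
    Submodule.finrank_mono hspan

theorem finrank_ker_add_two_le_of_skew_s2 [FiniteDimensional ℝ E]
    (hL : ∀ x y, ⟪L x, y⟫_ℝ = -⟪x, L y⟫_ℝ) (hL0 : L ≠ 0) :
    finrank ℝ L.ker + 2 ≤ finrank ℝ E := by
  have := two_le_finrank_range_of_skew hL hL0
  have := L.finrank_range_add_finrank_ker
  omega

end Skew

theorem Matrix.inner_toEuclideanLin_of_transpose_eq_neg {m : Type*} [Fintype m] [DecidableEq m]
    {A : Matrix m m ℝ} (hA : Aᵀ = -A) (x y : EuclideanSpace ℝ m) :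
    ⟪toEuclideanLin A x, y⟫_ℝ = -⟪x, toEuclideanLin A y⟫_ℝ := by
  have hadj : LinearMap.adjoint (toEuclideanLin A) = -toEuclideanLin A := by
    rw [← toEuclideanLin_conjTranspose_eq_adjoint, conjTranspose_eq_transpose_of_trivial, hA,
      map_neg]
  rw [← LinearMap.adjoint_inner_right, hadj, LinearMap.neg_apply, inner_neg_right]

section Fiber

variable {E F : Type*} [NormedAddCommGroup E] [NormedSpace ℝ E] [FiniteDimensional ℝ E]
  [AddCommGroup F] [Module ℝ F]

theorem dimH_preimage_singleton_le_finrank_ker (L : E →ₗ[ℝ] F) (c : F) :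
    dimH (L ⁻¹' {c}) ≤ finrank ℝ L.ker := by
  rcases (L ⁻¹' {c}).eq_empty_or_nonempty with h | h
  · simp [h]
  have hconv : Convex ℝ (L ⁻¹' {c}) := (convex_singleton c).linear_preimage L
  rw [Real.Convex.dimH_eq_finrank_vectorSpan hconv h, Nat.cast_le]
  refine Submodule.finrank_mono (Submodule.span_le.2 ?_)
  rintro _ ⟨x, hx, y, hy, rfl⟩
  simp_all [LinearMap.mem_ker]

theorem hausdorffMeasure_preimage_singleton_eq_zero [MeasurableSpace E] [BorelSpace E]
    (L : E →ₗ[ℝ] F) (c : F) {d : ℝ} (hd : finrank ℝ L.ker < d) :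
    μH[d] (L ⁻¹' {c}) = 0 := by
  lift d to NNReal using (Nat.cast_nonneg _).trans hd.le
  exact hausdorffMeasure_of_dimH_lt <|
    (dimH_preimage_singleton_le_finrank_ker L c).trans_lt (by exact_mod_cast hd)

end Fiber

theorem stmt2_general (n : ℕ) (S : Set (EuclideanSpace ℝ (Fin n)))
    (h0 : 0 < μH[(n : ℝ) - 1] S)
    (A : Matrix (Fin n) (Fin n) ℝ) (c : EuclideanSpace ℝ (Fin n))
    (hA : Aᵀ = -A)
    (h : ∀ x ∈ S, Matrix.toEuclideanLin A x = c) :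
    A = 0 ∧ c = 0 := by
  have hS : S ⊆ toEuclideanLin A ⁻¹' {c} := h
  have hA0 : A = 0 := by
    by_contra hA0
    have hker := finrank_ker_add_two_le_of_skew_s2 (inner_toEuclideanLin_of_transpose_eq_neg hA)
      (by simpa using hA0)
    rw [finrank_euclideanSpace_fin] at hker
    refine h0.ne' (measure_mono_null hS (hausdorffMeasure_preimage_singleton_eq_zero _ c ?_))
    have : (finrank ℝ (toEuclideanLin A).ker : ℝ) + 2 ≤ n := by exact_mod_cast hker
    linarith
  obtain ⟨x₀, hx₀⟩ := nonempty_of_measure_ne_zero h0.ne'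
  exact ⟨hA0, by simpa [hA0] using (h x₀ hx₀).symm⟩

/-- An antisymmetric matrix that acts as a fixed constant on a set of positive `H^{n-1}`
measure vanishes (together with the constant). -/
theorem stmt2 (n : ℕ) (hn : 2 ≤ n) (S : Set (EuclideanSpace ℝ (Fin n)))
    (hSm : MeasurableSet S) (h0 : 0 < μH[(n : ℝ) - 1] S)
    (A : Matrix (Fin n) (Fin n) ℝ) (c : EuclideanSpace ℝ (Fin n))
    (hA : Aᵀ = -A)
    (h : ∀ x ∈ S, Matrix.toEuclideanLin A x = c) :
    A = 0 ∧ c = 0 :=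
  stmt2_general n S h0 A c hA h
end

section
/- There exists a constant c > 0 such that for all μ₁, μ₂, μ₃ > 0 with μ₁ μ₂ μ₃ = 1, one has μ₁² + μ₂² + μ₃² ≥ 3 + c ((μ₁ − 1)² + (μ₂ − 1)² + (μ₃ − 1)²). In particular, on the set {μ ∈ (0,∞)³ : μ₁μ₂μ₃ = 1} the function μ ↦ μ₁² + μ₂² + μ₃² attains its minimum value 3 precisely at μ = (1,1,1). -/
lemma amgm3 (a b c : ℝ) (ha : 0 < a) (hb : 0 < b) (hc : 0 < c)
    (h : a * b * c = 1) : a + b + c ≥ 3 := by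
  nlinarith [sq_nonneg (a - b), sq_nonneg (b - c), sq_nonneg (a - c),
    sq_nonneg (a + b + c - 3), mul_pos ha hb, mul_pos hb hc, mul_pos ha hc,
    sq_nonneg (a + b + c)]

/-- Quantitative constrained inequality: on `{μ ∈ (0,∞)³ : μ₁μ₂μ₃ = 1}` one has
`μ₁² + μ₂² + μ₃² ≥ 3 + c Σ(μᵢ−1)²`, and the minimum value `3` is attained exactly
at `(1,1,1)`. -/
theorem stmt9 : ∃ c > (0 : ℝ),
    (∀ μ₁ μ₂ μ₃ : ℝ, 0 < μ₁ → 0 < μ₂ → 0 < μ₃ → μ₁ * μ₂ * μ₃ = 1 →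
      μ₁ ^ 2 + μ₂ ^ 2 + μ₃ ^ 2 ≥
        3 + c * ((μ₁ - 1) ^ 2 + (μ₂ - 1) ^ 2 + (μ₃ - 1) ^ 2)) ∧
    (∀ μ₁ μ₂ μ₃ : ℝ, 0 < μ₁ → 0 < μ₂ → 0 < μ₃ → μ₁ * μ₂ * μ₃ = 1 →
      (μ₁ ^ 2 + μ₂ ^ 2 + μ₃ ^ 2 = 3 ↔ μ₁ = 1 ∧ μ₂ = 1 ∧ μ₃ = 1)) := by
  refine ⟨1, one_pos, ?_, ?_⟩
  · intro μ₁ μ₂ μ₃ h1 h2 h3 h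
    have := amgm3 μ₁ μ₂ μ₃ h1 h2 h3 h
    nlinarith
  · intro μ₁ μ₂ μ₃ h1 h2 h3 h
    constructor
    · intro heq
      have hs := amgm3 μ₁ μ₂ μ₃ h1 h2 h3 h
      have e1 : μ₁ = 1 := by nlinarith [sq_nonneg (μ₂ - 1), sq_nonneg (μ₃ - 1), sq_nonneg (μ₁ - 1)]
      have e2 : μ₂ = 1 := by nlinarith [sq_nonneg (μ₂ - 1), sq_nonneg (μ₃ - 1), sq_nonneg (μ₁ - 1)]
      have e3 : μ₃ = 1 := by nlinarith [sq_nonneg (μ₂ - 1), sq_nonneg (μ₃ - 1), sq_nonneg (μ₁ - 1)]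
      exact ⟨e1, e2, e3⟩
    · rintro ⟨rfl, rfl, rfl⟩; norm_num
end

section
/- Let ε₀ > 0 and let ρ₁, ρ₂, ρ₃ : (0, ε₀) → ℝ be bounded functions with ρ₁(ε) + ρ₂(ε) + ρ₃(ε) = 0 for all ε, and set γ_{ε,i} := e^{ε ρ_i(ε)}. Then there exist constants c > 0 and C > 0 such that for every ε ∈ (0, ε₀) and every X ∈ ℝ^{3×3} with det X = 1: σ₁(X)²/γ_{ε,1}² + σ₂(X)²/γ_{ε,2}² + σ₃(X)²/γ_{ε,3}² − 3 ≥ c (σ₁(X) − 1)² + c (σ₂(X) − 1)² + c (σ₃(X) − 1)² − C ε². -/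
open MeasureTheory Filter Matrix

/-! Write `h_i = e^{-ε ρ_i(ε)}`, so that the energy is `Σ (σ_i h_i)² − 3`. Since
`∏ σ_i = det X = 1` and `Σ ρ_i = 0`, the numbers `σ_i h_i` have product one, and AM–GM gives
`Σ σ_i h_i ≥ 3`; hence the energy dominates `Σ (σ_i h_i − 1)²`. Each term is bounded below using
`σ h − 1 = h (σ − 1) + (h − 1)`, where `h` is bounded away from zero and `|h − 1| = O(ε)`. -/

open Finset

theorem Real.abs_exp_sub_one_le_abs_mul_exp_abs (x : ℝ) :
    |Real.exp x - 1| ≤ |x| * Real.exp |x| := by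
  have := Complex.norm_exp_sub_sum_le_norm_mul_exp (x : ℂ) 1
  simp only [range_one, sum_singleton, pow_zero, Nat.factorial_zero, Nat.cast_one, div_one,
    pow_one, Complex.norm_real, Real.norm_eq_abs] at this
  exact_mod_cast this

theorem card_le_sum_of_prod_eq_one {ι : Type*} [Fintype ι] {z : ι → ℝ} (hz : ∀ i, 0 ≤ z i)
    (h : ∏ i, z i = 1) : (Fintype.card ι : ℝ) ≤ ∑ i, z i := by
  rcases isEmpty_or_nonempty ι with hι | hι
  · simp
  have hcard : (0 : ℝ) < Fintype.card ι := by exact_mod_cast Fintype.card_pos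
  have amgm := Real.geom_mean_le_arith_mean_weighted univ (fun _ => (Fintype.card ι : ℝ)⁻¹) z
    (fun _ _ => by positivity) (by simp [hcard.ne']) (fun i _ => hz i)
  rw [Real.finsetProd_rpow _ _ (fun i _ => hz i), h, Real.one_rpow, ← mul_sum] at amgm
  rwa [inv_mul_eq_div, one_le_div hcard] at amgm

theorem sum_sub_one_sq_le_sum_sq_sub_card {ι : Type*} [Fintype ι] {z : ι → ℝ}
    (hz : ∀ i, 0 ≤ z i) (h : ∏ i, z i = 1) :
    ∑ i, (z i - 1) ^ 2 ≤ ∑ i, z i ^ 2 - Fintype.card ι := by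
  have hexpand : ∑ i, (z i - 1) ^ 2 = ∑ i, z i ^ 2 - 2 * ∑ i, z i + Fintype.card ι := by
    simp [sub_sq, sum_add_distrib, sum_sub_distrib, mul_sum]
  linarith [card_le_sum_of_prod_eq_one hz h]

theorem prod_sortedEig {n : ℕ} {A : Matrix (Fin n) (Fin n) ℝ} (hA : A.IsHermitian) :
    ∏ i, sortedEig A i = A.det := by
  rw [sortedEig, dif_pos hA, hA.det_eq_prod_eigenvalues]
  simpa using Equiv.prod_comp (Tuple.sort hA.eigenvalues) hA.eigenvalues

theorem prod_singVals {n : ℕ} (X : Matrix (Fin n) (Fin n) ℝ) : ∏ i, singVals X i = |X.det| := by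
  have hA : (Xᵀ * X).IsHermitian := by simpa using isHermitian_conjTranspose_mul_self X
  have hps : (Xᵀ * X).PosSemidef := by simpa using posSemidef_conjTranspose_mul_self X
  have hnonneg : ∀ i, 0 ≤ sortedEig (Xᵀ * X) i := by
    intro i
    rw [sortedEig, dif_pos hA]
    exact hps.eigenvalues_nonneg _
  unfold singVals
  rw [← Real.sqrt_prod _ (fun i _ => hnonneg i), prod_sortedEig hA, det_mul, det_transpose, ← sq,
    Real.sqrt_sq_eq_abs]

theorem mul_sq_sub_le_sq_mul_sub_one {s h c K : ℝ} (hc : 2 * c ≤ h ^ 2) (hK : (h - 1) ^ 2 ≤ K) :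
    c * (s - 1) ^ 2 - K ≤ (s * h - 1) ^ 2 := by
  -- `s h - 1 = h (s - 1) + (h - 1)` and `(a + b)² ≥ a²/2 - b²`
  nlinarith [sq_nonneg (h * (s - 1) + 2 * (h - 1)),
    mul_nonneg (sub_nonneg.2 hc) (sq_nonneg (s - 1))]

theorem sum_mul_sq_sub_one_sub_le_sum_sq_div_exp_sq_sub_card {ι : Type*} [Fintype ι]
    {s x : ι → ℝ} (hs : ∀ i, 0 ≤ s i) (hprod : ∏ i, s i = 1) (hx : ∑ i, x i = 0) {δ a : ℝ}
    (hxδ : ∀ i, |x i| ≤ δ) (hδa : δ ≤ a) :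
    ∑ i, Real.exp (-(2 * a)) / 2 * (s i - 1) ^ 2 - Fintype.card ι * (Real.exp (2 * a) * δ ^ 2) ≤
      ∑ i, s i ^ 2 / Real.exp (x i) ^ 2 - Fintype.card ι := by
  have hdiv : ∀ i, s i ^ 2 / Real.exp (x i) ^ 2 = (s i * Real.exp (-x i)) ^ 2 := fun i => by
    rw [mul_pow, Real.exp_neg, inv_pow, div_eq_mul_inv]
  have hprod_mul : ∏ i, s i * Real.exp (-x i) = 1 := by
    rw [prod_mul_distrib, hprod, ← Real.exp_sum, sum_neg_distrib, hx, neg_zero, Real.exp_zero,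
      one_mul]
  have hlower : ∀ i, 2 * (Real.exp (-(2 * a)) / 2) ≤ Real.exp (-x i) ^ 2 := fun i => by
    rw [mul_div_cancel₀ _ two_ne_zero, ← Real.exp_nat_mul, Real.exp_le_exp]
    push_cast
    linarith [le_abs_self (x i), hxδ i]
  have hupper : ∀ i, (Real.exp (-x i) - 1) ^ 2 ≤ Real.exp (2 * a) * δ ^ 2 := fun i =>
    calc (Real.exp (-x i) - 1) ^ 2 = |Real.exp (-x i) - 1| ^ 2 := (sq_abs _).symm
      _ ≤ (|x i| * Real.exp |x i|) ^ 2 := by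
        simpa using pow_le_pow_left₀ (abs_nonneg _)
          (Real.abs_exp_sub_one_le_abs_mul_exp_abs (-x i)) 2
      _ ≤ (δ * Real.exp a) ^ 2 := by
        have hδ : 0 ≤ δ := (abs_nonneg _).trans (hxδ i)
        gcongr
        · exact hxδ i
        · exact (hxδ i).trans hδa
      _ = Real.exp (2 * a) * δ ^ 2 := by
        rw [mul_pow, ← Real.exp_nat_mul]; push_cast; ring
  calc ∑ i, Real.exp (-(2 * a)) / 2 * (s i - 1) ^ 2 - Fintype.card ι * (Real.exp (2 * a) * δ ^ 2)
      = ∑ i, (Real.exp (-(2 * a)) / 2 * (s i - 1) ^ 2 - Real.exp (2 * a) * δ ^ 2) := by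
        simp [sum_sub_distrib]
    _ ≤ ∑ i, (s i * Real.exp (-x i) - 1) ^ 2 :=
        sum_le_sum fun i _ => mul_sq_sub_le_sq_mul_sub_one (hlower i) (hupper i)
    _ ≤ ∑ i, (s i * Real.exp (-x i)) ^ 2 - Fintype.card ι :=
        sum_sub_one_sq_le_sum_sq_sub_card
          (fun i => mul_nonneg (hs i) (Real.exp_pos _).le) hprod_mul
    _ = ∑ i, s i ^ 2 / Real.exp (x i) ^ 2 - Fintype.card ι := by simp only [hdiv]

theorem stmt10_general (ε₀ : ℝ) (ρ : Fin 3 → ℝ → ℝ)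
    (hbdd : ∀ i, ∃ M : ℝ, ∀ ε ∈ Set.Ioo 0 ε₀, |ρ i ε| ≤ M)
    (hsum : ∀ ε ∈ Set.Ioo 0 ε₀, ρ 0 ε + ρ 1 ε + ρ 2 ε = 0) :
    ∃ c > (0 : ℝ), ∃ C > (0 : ℝ), ∀ ε ∈ Set.Ioo 0 ε₀,
      ∀ X : Matrix (Fin 3) (Fin 3) ℝ, X.det = 1 →
        (∑ i, (singVals X i) ^ 2 / (Real.exp (ε * ρ i ε)) ^ 2) - 3 ≥
          (∑ i, c * (singVals X i - 1) ^ 2) - C * ε ^ 2 := by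
  choose M hM using hbdd
  set B := 1 + ∑ i, |M i|
  have hB : 0 < B := by positivity
  have hρB : ∀ i, ∀ ε ∈ Set.Ioo 0 ε₀, |ρ i ε| ≤ B := fun i ε hε =>
    calc |ρ i ε| ≤ |M i| := (hM i ε hε).trans (le_abs_self _)
      _ ≤ ∑ j, |M j| := single_le_sum (fun j _ => abs_nonneg (M j)) (mem_univ i)
      _ ≤ B := le_add_of_nonneg_left zero_le_one
  refine ⟨Real.exp (-(2 * (ε₀ * B))) / 2, by positivity, 3 * (Real.exp (2 * (ε₀ * B)) * B ^ 2),
    by positivity, fun ε hε X hX => ?_⟩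
  have key := sum_mul_sq_sub_one_sub_le_sum_sq_div_exp_sq_sub_card (s := singVals X)
    (x := fun i => ε * ρ i ε) (δ := ε * B) (a := ε₀ * B) (fun i => Real.sqrt_nonneg _)
    (by rw [prod_singVals, hX, abs_one])
    (by rw [← mul_sum, Fin.sum_univ_three, hsum ε hε, mul_zero])
    (fun i => by
      rw [abs_mul, abs_of_pos hε.1]
      exact mul_le_mul_of_nonneg_left (hρB i ε hε) hε.1.le)
    (mul_le_mul_of_nonneg_right hε.2.le hB.le)
  simp only [Fintype.card_fin, Nat.cast_ofNat] at key
  linarith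

/-- Coercivity of the Bladon–Terentjev–Warner energy: with preferred strains
`γ_{ε,i} = e^{ε ρ_i(ε)}` (bounded `ρ_i` summing to zero), the stored energy
`Σ σ_i(X)²/γ_{ε,i}² − 3` dominates `c Σ (σ_i(X) − 1)² − C ε²` on `SL(3)`. -/
theorem stmt10 (ε₀ : ℝ) (hε₀ : 0 < ε₀) (ρ : Fin 3 → ℝ → ℝ)
    (hbdd : ∀ i, ∃ M : ℝ, ∀ ε ∈ Set.Ioo 0 ε₀, |ρ i ε| ≤ M)
    (hsum : ∀ ε ∈ Set.Ioo 0 ε₀, ρ 0 ε + ρ 1 ε + ρ 2 ε = 0) :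
    ∃ c > (0 : ℝ), ∃ C > (0 : ℝ), ∀ ε ∈ Set.Ioo 0 ε₀,
      ∀ X : Matrix (Fin 3) (Fin 3) ℝ, X.det = 1 →
        (∑ i, (singVals X i) ^ 2 / (Real.exp (ε * ρ i ε)) ^ 2) - 3 ≥
          (∑ i, c * (singVals X i - 1) ^ 2) - C * ε ^ 2 :=
  stmt10_general ε₀ ρ hbdd hsum
end

section
/- For every n ≥ 1 and every r > 0 there exist ε₀ > 0 and C > 0 with the following property: for every symmetric Y ∈ ℝ^{n×n} with |Y| ≤ r and every ε ∈ (0, ε₀], one has det(Id + εY) > 0, the matrix (det(Id + εY))^{−1/n} (Id + εY) is symmetric positive definite with determinant 1, and the unique symmetric trace-free matrix Z with exp(Z) = (det(Id + εY))^{−1/n} (Id + εY) satisfies |Z − ε Y_dev| ≤ C ε². -/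
open MeasureTheory Filter Matrix

/-!
Diagonalise `Y = U diag(λ) Uᵀ`. Then `Id + εY`, its unimodular part and the candidate logarithm
`Z = U diag(μ) Uᵀ`, with `μᵢ = log(1 + ελᵢ) - (1/n) ∑ⱼ log(1 + ελⱼ)`, are all diagonal in the same
basis, so `Z - ε Y_dev = U diag(δ) Uᵀ`, where `δ` is the mean-free part of
`log(1 + ελᵢ) - ελᵢ = O(ε²)`.
Uniqueness holds because the matrix exponential is injective on symmetric matrices (its inverse
is the continuous functional calculus logarithm).
-/

lemma abs_log_one_add_sub_le {x s : ℝ} (hx : |x| ≤ s) (hs : s ≤ 1 / 2) :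
    |Real.log (1 + x) - x| ≤ 2 * s ^ 2 := by
  obtain ⟨hx₁, hx₂⟩ := abs_le.1 hx
  have hpos : (0 : ℝ) < 1 + x := by linarith
  have hupper : Real.log (1 + x) ≤ x := by linarith [Real.log_le_sub_one_of_pos hpos]
  have hlower : 1 - (1 + x)⁻¹ ≤ Real.log (1 + x) := by
    linarith [Real.log_le_sub_one_of_pos (inv_pos.2 hpos), Real.log_inv (1 + x)]
  have hinv : (1 + x)⁻¹ ≤ 1 - x + 2 * x ^ 2 := by
    rw [inv_le_iff_one_le_mul₀' hpos]
    nlinarith [sq_nonneg x]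
  have hsq : x ^ 2 ≤ s ^ 2 := sq_le_sq' hx₁ hx₂
  rw [abs_le]
  constructor <;> nlinarith [sq_nonneg x]

section Deviator

variable {n : ℕ}

noncomputable def vdev (v : Fin n → ℝ) : Fin n → ℝ := v - ((∑ j, v j) / n) • 1

lemma vdev_apply (v : Fin n → ℝ) (i : Fin n) : vdev v i = v i - (∑ j, v j) / n := by
  simp [vdev]

lemma sum_vdev (hn : n ≠ 0) (v : Fin n → ℝ) : ∑ i, vdev v i = 0 := by
  simp only [vdev_apply, Finset.sum_sub_distrib, Finset.sum_const, Finset.card_univ,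
    Fintype.card_fin, nsmul_eq_mul]
  field_simp
  ring

lemma vdev_sub_smul (v w : Fin n → ℝ) (c : ℝ) : vdev (v - c • w) = vdev v - c • vdev w := by
  ext i
  simp only [vdev_apply, Pi.sub_apply, Pi.smul_apply, smul_eq_mul, Finset.sum_sub_distrib,
    ← Finset.mul_sum]
  ring

lemma abs_vdev_le {v : Fin n → ℝ} {M : ℝ} (hv : ∀ i, |v i| ≤ M) (i : Fin n) :
    |vdev v i| ≤ 2 * M := by
  have hn : (0 : ℝ) < n := by exact_mod_cast i.pos
  have hmean : |(∑ j, v j) / n| ≤ M := by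
    rw [abs_div, abs_of_pos hn, div_le_iff₀ hn]
    calc |∑ j, v j| ≤ ∑ j, |v j| := Finset.abs_sum_le_sum_abs _ _
      _ ≤ ∑ _j : Fin n, M := Finset.sum_le_sum fun j _ => hv j
      _ = M * n := by simp [mul_comm]
  rw [vdev_apply]
  linarith [abs_sub (v i) ((∑ j, v j) / n), hv i]

lemma exp_vdev_log {d : Fin n → ℝ} (hd : ∀ i, 0 < d i) (i : Fin n) :
    Real.exp (vdev (Real.log ∘ d) i) = (∏ j, d j) ^ (-(1 : ℝ) / n) * d i := by
  rw [Real.rpow_def_of_pos (Finset.prod_pos fun j _ => hd j), ← Real.exp_log (hd i),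
    ← Real.exp_add, Real.log_prod fun j _ => (hd j).ne', vdev_apply]
  congr 1
  simp only [Function.comp]
  ring

end Deviator

section ConjDiagonal

variable {ι : Type*} [Fintype ι] [DecidableEq ι] (U : unitary (Matrix ι ι ℝ))

def conjDiag : (ι → ℝ) →ₐ[ℝ] Matrix ι ι ℝ :=
  (Unitary.conjStarAlgAut ℝ _ U : Matrix ι ι ℝ →ₐ[ℝ] Matrix ι ι ℝ).comp (diagonalAlgHom ℝ)

lemma conjDiag_apply (d : ι → ℝ) :
    conjDiag U d = (U : Matrix ι ι ℝ) * diagonal d * star (U : Matrix ι ι ℝ) := rfl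

lemma transpose_conjDiag (d : ι → ℝ) : (conjDiag U d)ᵀ = conjDiag U d := by
  simp [conjDiag_apply, Matrix.transpose_mul, Matrix.mul_assoc, Matrix.star_eq_conjTranspose]

lemma trace_conjDiag (d : ι → ℝ) : (conjDiag U d).trace = ∑ i, d i := by
  rw [conjDiag_apply, trace_mul_cycle, Unitary.coe_star_mul_self, Matrix.one_mul, trace_diagonal]

lemma det_conjDiag (d : ι → ℝ) : (conjDiag U d).det = ∏ i, d i := by
  rw [conjDiag_apply, det_mul, det_mul, mul_right_comm, ← det_mul,
    Unitary.mul_star_self_of_mem U.2, det_one, one_mul, det_diagonal]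

lemma posDef_conjDiag {d : ι → ℝ} (hd : ∀ i, 0 < d i) : (conjDiag U d).PosDef := by
  rw [conjDiag_apply, Matrix.star_eq_conjTranspose]
  refine (PosDef.diagonal hd).mul_mul_conjTranspose_same fun x y hxy => ?_
  simpa using congrArg (· ᵥ* star (U : Matrix ι ι ℝ)) hxy

lemma exists_conjDiag_eq_of_transpose_eq {Y : Matrix ι ι ℝ} (hY : Yᵀ = Y) :
    ∃ U d, Y = conjDiag U d := by
  have hYh : Y.IsHermitian := by rwa [IsHermitian, conjTranspose_eq_transpose_of_trivial]
  refine ⟨hYh.eigenvectorUnitary, hYh.eigenvalues, ?_⟩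
  simpa [conjDiag_apply, RCLike.ofReal_real_eq_id] using hYh.spectral_theorem

end ConjDiagonal

section FinMatrix

variable {n : ℕ}

lemma frobSq_eq_trace (X : Matrix (Fin n) (Fin n) ℝ) : frobSq X = (Xᵀ * X).trace := by
  simp only [frobSq, trace, diag, mul_apply, transpose_apply, sq]
  exact Finset.sum_comm

lemma mexp_eq_exp (X : Matrix (Fin n) (Fin n) ℝ) : mexp X = NormedSpace.exp X := by
  rw [NormedSpace.exp_eq_tsum ℝ]
  rfl

lemma eq_of_mexp_eq {W₁ W₂ : Matrix (Fin n) (Fin n) ℝ} (h₁ : W₁ᵀ = W₁) (h₂ : W₂ᵀ = W₂)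
    (h : mexp W₁ = mexp W₂) : W₁ = W₂ := by
  let _ : NormedRing (Matrix (Fin n) (Fin n) ℝ) := Matrix.instL2OpNormedRing
  let _ : NormedAlgebra ℝ (Matrix (Fin n) (Fin n) ℝ) := Matrix.instL2OpNormedAlgebra
  have hsa : ∀ W : Matrix (Fin n) (Fin n) ℝ, Wᵀ = W → IsSelfAdjoint W := fun W hW => by
    rwa [IsSelfAdjoint, star_eq_conjTranspose, conjTranspose_eq_transpose_of_trivial]
  rw [mexp_eq_exp, mexp_eq_exp] at h
  rw [← CFC.log_exp W₁ (hsa W₁ h₁), h, CFC.log_exp W₂ (hsa W₂ h₂)]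

variable (U : unitary (Matrix (Fin n) (Fin n) ℝ))

lemma frob_conjDiag (d : Fin n → ℝ) : frob (conjDiag U d) = √(∑ i, d i ^ 2) := by
  rw [frob, frobSq_eq_trace, transpose_conjDiag, ← map_mul, trace_conjDiag]
  simp [sq]

lemma mexp_conjDiag (v : Fin n → ℝ) : mexp (conjDiag U v) = conjDiag U (Real.exp ∘ v) := by
  have hinv : (U : Matrix (Fin n) (Fin n) ℝ)⁻¹ = star (U : Matrix (Fin n) (Fin n) ℝ) :=
    inv_eq_left_inv (Unitary.coe_star_mul_self U)
  rw [mexp_eq_exp, conjDiag_apply, conjDiag_apply, ← hinv,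
    Matrix.exp_conj (U : Matrix (Fin n) (Fin n) ℝ) _ (Unitary.toUnits U).isUnit,
    Matrix.exp_diagonal]
  congr
  ext i
  simp [Real.exp_eq_exp_ℝ]

lemma abs_le_frob_conjDiag (d : Fin n → ℝ) (i : Fin n) : |d i| ≤ frob (conjDiag U d) := by
  rw [frob_conjDiag, ← Real.sqrt_sq_eq_abs]
  exact Real.sqrt_le_sqrt (Finset.single_le_sum (fun j _ => sq_nonneg (d j)) (Finset.mem_univ i))

lemma frob_conjDiag_le {d : Fin n → ℝ} {M : ℝ} (hM : 0 ≤ M) (hd : ∀ i, |d i| ≤ M) :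
    frob (conjDiag U d) ≤ √n * M := by
  rw [frob_conjDiag, ← Real.sqrt_sq hM, ← Real.sqrt_mul (Nat.cast_nonneg n)]
  refine Real.sqrt_le_sqrt ?_
  calc ∑ i, d i ^ 2 ≤ ∑ _i : Fin n, M ^ 2 :=
        Finset.sum_le_sum fun i _ => sq_le_sq' (abs_le.1 (hd i)).1 (abs_le.1 (hd i)).2
    _ = n * M ^ 2 := by simp

lemma posDef_mexp_conjDiag (v : Fin n → ℝ) : (mexp (conjDiag U v)).PosDef := by
  rw [mexp_conjDiag]
  exact posDef_conjDiag U fun i => Real.exp_pos _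

lemma det_mexp_conjDiag (v : Fin n → ℝ) : (mexp (conjDiag U v)).det = Real.exp (∑ i, v i) := by
  rw [mexp_conjDiag, det_conjDiag, Real.exp_sum]
  rfl

lemma one_add_smul_conjDiag (c : ℝ) (v : Fin n → ℝ) :
    1 + c • conjDiag U v = conjDiag U (1 + c • v) := by
  rw [map_add, map_smul, map_one]

lemma mdev_conjDiag (v : Fin n → ℝ) : mdev (conjDiag U v) = conjDiag U (vdev v) := by
  rw [mdev, vdev, map_sub, map_smul, map_one, trace_conjDiag]

lemma rpow_det_smul_conjDiag {d : Fin n → ℝ} (hd : ∀ i, 0 < d i) :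
    (conjDiag U d).det ^ (-(1 : ℝ) / n) • conjDiag U d
      = mexp (conjDiag U (vdev (Real.log ∘ d))) := by
  rw [mexp_conjDiag, det_conjDiag, ← map_smul]
  congr 1
  ext i
  simp [exp_vdev_log hd]

end FinMatrix

/-- Expansion of the symmetric trace-free logarithm: for symmetric `Y` with `|Y| ≤ r` and
small `ε`, `det(Id + εY) > 0`, the unimodular part `(det(Id+εY))^{−1/n}(Id+εY)` is symmetric
positive definite of determinant one, and its unique symmetric trace-free logarithm `Z`
satisfies `|Z − ε Y_dev| ≤ C ε²`. -/
theorem stmt16 (n : ℕ) (hn : 1 ≤ n) (r : ℝ) (hr : 0 < r) :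
    ∃ ε₀ > (0 : ℝ), ∃ C > (0 : ℝ), ∀ Y : Matrix (Fin n) (Fin n) ℝ, Yᵀ = Y → frob Y ≤ r →
      ∀ ε : ℝ, 0 < ε → ε ≤ ε₀ →
        0 < (1 + ε • Y).det ∧
        ((((1 + ε • Y).det ^ (-(1 : ℝ) / n)) • (1 + ε • Y) :
            Matrix (Fin n) (Fin n) ℝ)).PosDef ∧
        ((((1 + ε • Y).det ^ (-(1 : ℝ) / n)) • (1 + ε • Y) :
            Matrix (Fin n) (Fin n) ℝ)).det = 1 ∧
        ∃ Z : Matrix (Fin n) (Fin n) ℝ,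
          (Zᵀ = Z ∧ Z.trace = 0 ∧
            mexp Z = ((1 + ε • Y).det ^ (-(1 : ℝ) / n)) • (1 + ε • Y)) ∧
          frob (Z - ε • mdev Y) ≤ C * ε ^ 2 ∧
          (∀ Z' : Matrix (Fin n) (Fin n) ℝ, Z'ᵀ = Z' → Z'.trace = 0 →
            mexp Z' = ((1 + ε • Y).det ^ (-(1 : ℝ) / n)) • (1 + ε • Y) → Z' = Z) := by
  have hn0 : n ≠ 0 := by omega
  refine ⟨(2 * r)⁻¹, by positivity, 4 * r ^ 2 * √n, by positivity, ?_⟩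
  intro Y hYt hYr ε hε hεε₀
  obtain ⟨U, l, rfl⟩ := exists_conjDiag_eq_of_transpose_eq hYt
  have hεr : ε * r ≤ 1 / 2 := by
    calc ε * r ≤ (2 * r)⁻¹ * r := by gcongr
      _ = 1 / 2 := by field_simp
  have hεl : ∀ i, |ε * l i| ≤ ε * r := fun i => by
    rw [abs_mul, abs_of_pos hε]
    exact mul_le_mul_of_nonneg_left ((abs_le_frob_conjDiag U l i).trans hYr) hε.le
  have hd : ∀ i, 0 < (1 + ε • l) i := fun i => by
    linarith [neg_abs_le (ε * l i), hεl i, show (1 + ε • l) i = 1 + ε * l i from rfl]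
  set Z := conjDiag U (vdev (Real.log ∘ (1 + ε • l)))
  rw [one_add_smul_conjDiag, rpow_det_smul_conjDiag U hd]
  refine ⟨det_conjDiag U _ ▸ Finset.prod_pos fun i _ => hd i, posDef_mexp_conjDiag U _,
    by rw [det_mexp_conjDiag, sum_vdev hn0, Real.exp_zero],
    Z, ⟨transpose_conjDiag U _, (trace_conjDiag U _).trans (sum_vdev hn0 _), rfl⟩, ?_,
    fun Z' hZ' _ hexp => eq_of_mexp_eq hZ' (transpose_conjDiag U _) hexp⟩
  calc frob (Z - ε • mdev (conjDiag U l))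
      = frob (conjDiag U (vdev (Real.log ∘ (1 + ε • l) - ε • l))) := by
        rw [mdev_conjDiag, ← map_smul, ← map_sub, vdev_sub_smul]
    _ ≤ √n * (2 * (2 * (ε * r) ^ 2)) :=
        frob_conjDiag_le U (by positivity)
          (abs_vdev_le fun i => abs_log_one_add_sub_le (hεl i) hεr)
    _ = 4 * r ^ 2 * √n * ε ^ 2 := by ring
end
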